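/- arXiv:2101.00392 — 11 statements merged into one kernel-verified Lean document; each statement's English description precedes it below -/
import Mathlib

section
/- Let N ≥ 1 and let E : Fin N → Fin N → Prop satisfy E a a for every a. If C_1, …, C_m are elementary cycles of the digraph E whose vertex sets are pairwise disjoint, then the permutation of Fin N which acts as the cyclic shift along each C_r on the vertices of C_r and as the identity on all remaining vertices is a perfect matching of E. -/
theorem List.IsChain.rel_get_succ_mod {α : Type*} {R : α → α → Prop} {l : List α}
    (hchain : l.IsChain R) (hl : l ≠ []) (hclose : R (l.getLast hl) (l.head hl))
    (q : ℕ) (hq : q < l.length) :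
    R (l.get ⟨q, hq⟩)
      (l.get ⟨(q + 1) % l.length, Nat.mod_lt _ (List.length_pos_iff.mpr hl)⟩) := by
  rcases Nat.lt_or_ge (q + 1) l.length with hlt | hge
  · simpa [Nat.mod_eq_of_lt hlt] using List.isChain_iff_getElem.mp hchain q hlt
  · have hq_last : q = l.length - 1 := by omega
    have hwrap : (q + 1) % l.length = 0 := by rw [show q + 1 = l.length by omega, Nat.mod_self]
    subst hq_last
    simpa [hwrap, List.getLast_eq_getElem, List.head_eq_getElem] using hclose

theorem lqn_disjoint_cycles_give_pm_general (N m : ℕ)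
    (E : Fin N → Fin N → Prop) (hloop : ∀ a, E a a)
    (L : Fin m → List (Fin N))
    (hne : ∀ r, L r ≠ [])
    (hchain : ∀ r, (L r).Chain' E)
    (hcyc : ∀ r, E ((L r).getLast (hne r)) ((L r).head (hne r)))
    (σ : Equiv.Perm (Fin N))
    (hshift : ∀ r (q : ℕ) (hq : q < (L r).length),
      σ ((L r).get ⟨q, hq⟩) =
        (L r).get ⟨(q + 1) % (L r).length,
          Nat.mod_lt _ (List.length_pos_iff.mpr (hne r))⟩)
    (hfix : ∀ a : Fin N, (∀ r, a ∉ L r) → σ a = a) :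
    ∀ a : Fin N, E a (σ a) := by
  intro a
  by_cases hcycle : ∃ r, a ∈ L r
  · obtain ⟨r, ha⟩ := hcycle
    obtain ⟨⟨q, hq⟩, rfl⟩ := List.mem_iff_get.mp ha
    rw [hshift r q hq]
    exact (hchain r).rel_get_succ_mod (hne r) (hcyc r) q hq
  · rw [hfix a fun r hr => hcycle ⟨r, hr⟩]
    exact hloop a

/-- If every vertex of the digraph `E` on `Fin N` has a loop, and
`L 0, …, L (m-1)` are elementary cycles of `E` with pairwise disjoint vertex sets, then
the permutation `σ` that acts as the cyclic shift along each cycle and as the identity on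
all remaining vertices is a perfect matching of `E`. -/
theorem lqn_disjoint_cycles_give_pm (N m : ℕ) (hN : 1 ≤ N)
    (E : Fin N → Fin N → Prop) (hloop : ∀ a, E a a)
    (L : Fin m → List (Fin N))
    (hnd : ∀ r, (L r).Nodup)
    (hne : ∀ r, L r ≠ [])
    (hchain : ∀ r, (L r).Chain' E)
    (hcyc : ∀ r, E ((L r).getLast (hne r)) ((L r).head (hne r)))
    (hdisj : ∀ r s, r ≠ s → ∀ a : Fin N, a ∈ L r → a ∉ L s)
    (σ : Equiv.Perm (Fin N))
    (hshift : ∀ r (q : ℕ) (hq : q < (L r).length),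
      σ ((L r).get ⟨q, hq⟩) =
        (L r).get ⟨(q + 1) % (L r).length,
          Nat.mod_lt _ (List.length_pos_iff.mpr (hne r))⟩)
    (hfix : ∀ a : Fin N, (∀ r, a ∉ L r) → σ a = a) :
    ∀ a : Fin N, E a (σ a) :=
  lqn_disjoint_cycles_give_pm_general N m E hloop L hne hchain hcyc σ hshift hfix
end

section
/- Let N ≥ 1 and let E : Fin N → Fin N → Prop satisfy E a a for every a. For any a ≠ j with E a j, the edge (a, j) is maximally matchable (i.e., lies in some perfect matching of E) if and only if there exists an elementary cycle of the digraph E whose first two vertices are a and j (that is, pairwise distinct vertices i_1 = a, i_2 = j, i_3, …, i_k with E i_q i_{q+1} for all q < k and E i_k i_1). -/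
/-!
A perfect matching is a permutation `σ` with `E b (σ b)` for all `b`. If `σ a = j ≠ a`, the
`σ`-cycle through `a` lists `a, j, σ j, …` and is an elementary cycle of `E`. Conversely, the
cyclic permutation `formPerm` of an elementary cycle `a, j, …` follows its edges, and fixing
every other vertex is allowed because of the loops.
-/

namespace List

variable {α : Type*} [DecidableEq α] {R : α → α → Prop}

theorem forall_mem_rel_formPerm_iff {l : List α} (hl : l.Nodup) (hne : l ≠ []) :
    (∀ x ∈ l, R x (l.formPerm x)) ↔ l.IsChain R ∧ R (l.getLast hne) (l.head hne) := by
  have hpos : 0 < l.length := length_pos_iff.2 hne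
  simp only [forall_mem_iff_getElem, formPerm_apply_getElem _ hl, isChain_iff_getElem,
    getLast_eq_getElem, head_eq_getElem]
  constructor
  · intro h
    refine ⟨fun i hi => ?_, ?_⟩
    · simpa [Nat.mod_eq_of_lt hi] using h i (by omega)
    · simpa [Nat.sub_add_cancel hpos] using h (l.length - 1) (by omega)
  · rintro ⟨hchain, hlast⟩ i hi
    rcases Nat.lt_or_ge (i + 1) l.length with hlt | hge
    · simpa [Nat.mod_eq_of_lt hlt] using hchain i hlt
    · obtain rfl : i = l.length - 1 := by omega
      simpa [Nat.sub_add_cancel hpos] using hlast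

end List

namespace Equiv.Perm

variable {α : Type*} [Fintype α] [DecidableEq α]

theorem exists_toList_eq_cons_cons {σ : Perm α} {a : α} (ha : σ a ≠ a) :
    ∃ t, σ.toList a = a :: σ a :: t := by
  have hlen : 2 ≤ (σ.toList a).length :=
    two_le_length_toList_iff_mem_support.2 (mem_support.2 ha)
  match h : σ.toList a, hlen with
  | x :: y :: t, _ =>
    have hx := getElem_toList (p := σ) (x := a) 0 (by omega)
    have hy := getElem_toList (p := σ) (x := a) 1 (by omega)
    simp only [h, List.getElem_cons_zero, List.getElem_cons_succ, pow_zero, pow_one,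
      one_apply] at hx hy
    exact ⟨t, by rw [hx, hy]⟩

theorem forall_mem_toList_rel_formPerm {R : α → α → Prop} {σ : Perm α}
    (hσ : ∀ b, R b (σ b)) (a : α) : ∀ y ∈ σ.toList a, R y ((σ.toList a).formPerm y) := by
  intro y hy
  rw [formPerm_toList, ((mem_toList_iff.1 hy).1).cycleOf_apply]
  exact hσ y

end Equiv.Perm

theorem lqn_maximally_matchable_iff_cycle_general (N : ℕ)
    (E : Fin N → Fin N → Prop) (hloop : ∀ a, E a a)
    (a j : Fin N) (hne : a ≠ j) :
    (∃ σ : Equiv.Perm (Fin N), (∀ b, E b (σ b)) ∧ σ a = j) ↔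
    (∃ t : List (Fin N), (a :: j :: t).Nodup ∧ (a :: j :: t).Chain' E ∧
      E ((a :: j :: t).getLast (List.cons_ne_nil _ _)) a) := by
  constructor
  · rintro ⟨σ, hσ, rfl⟩
    obtain ⟨t, ht⟩ := σ.exists_toList_eq_cons_cons hne.symm
    have hnd : (a :: σ a :: t).Nodup := ht ▸ σ.nodup_toList a
    have hcycle := σ.forall_mem_toList_rel_formPerm hσ a
    rw [ht, List.forall_mem_rel_formPerm_iff hnd (List.cons_ne_nil _ _)] at hcycle
    exact ⟨t, hnd, hcycle⟩
  · rintro ⟨t, hnd, hchain, hlast⟩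
    have hcycle := (List.forall_mem_rel_formPerm_iff hnd (List.cons_ne_nil _ _)).2 ⟨hchain, hlast⟩
    refine ⟨(a :: j :: t).formPerm, fun b => ?_, List.formPerm_apply_head a j t hnd⟩
    by_cases hb : b ∈ a :: j :: t
    · exact hcycle b hb
    · rw [List.formPerm_apply_of_notMem hb]
      exact hloop b

/-- For a digraph `E` on `Fin N` with a loop at every vertex, an edge
`(a, j)` with `a ≠ j` is maximally matchable (lies in some perfect matching) iff there is
an elementary cycle of `E` whose first two vertices are `a` and `j`: a nodup list
`a :: j :: t` whose consecutive vertices are joined by edges of `E` and whose last vertex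
has an edge back to `a`. -/
theorem lqn_maximally_matchable_iff_cycle (N : ℕ) (hN : 1 ≤ N)
    (E : Fin N → Fin N → Prop) (hloop : ∀ a, E a a)
    (a j : Fin N) (hne : a ≠ j) (he : E a j) :
    (∃ σ : Equiv.Perm (Fin N), (∀ b, E b (σ b)) ∧ σ a = j) ↔
    (∃ t : List (Fin N), (a :: j :: t).Nodup ∧ (a :: j :: t).Chain' E ∧
      E ((a :: j :: t).getLast (List.cons_ne_nil _ _)) a) :=
  lqn_maximally_matchable_iff_cycle_general N E hloop a j hne
end

section
/- (Lemma 1, amplitude form) Let N ≥ 1, let E : Fin N → Fin N → Prop, C : Fin N → Fin N → Bool, and T : Fin N → Fin N → ℂ with T a j ≠ 0 ↔ E a j, and let Ψ be the postselected coefficient function. If there are j : Fin N and c : Bool such that every maximally matchable edge (a, j) of E satisfies C a j = c, then Ψ s = 0 for every s : Fin N → Bool with s j ≠ c; i.e., the subsystem at detector j is separable from the rest in the computational basis, taking the definite value c. -/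
open scoped Classical

/-- The postselected (bosonic) coefficient function of an LQN:
`Ψ s = Σ_{σ PM of E with outcome string s} Π_a T a (σ a)`. -/
noncomputable def lqnPsi {V : Type*} [Fintype V] [DecidableEq V]
    (E : V → V → Prop) (C : V → V → Bool) (T : V → V → ℂ)
    (s : V → Bool) : ℂ :=
  ∑ σ ∈ Finset.univ.filter (fun σ : Equiv.Perm V =>
      (∀ a, E a (σ a)) ∧ ∀ j, C (σ⁻¹ j) j = s j),
    ∏ a, T a (σ a)

theorem lqnPsi_eq_zero_of_no_matching {V : Type*} [Fintype V] [DecidableEq V]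
    (E : V → V → Prop) (C : V → V → Bool) (T : V → V → ℂ) (s : V → Bool)
    (h : ∀ σ : Equiv.Perm V, (∀ a, E a (σ a)) → ∃ j, C (σ⁻¹ j) j ≠ s j) :
    lqnPsi E C T s = 0 := by
  refine Finset.sum_eq_zero fun σ hσ => ?_
  obtain ⟨hE, hs⟩ := (Finset.mem_filter.mp hσ).2
  obtain ⟨j, hj⟩ := h σ hE
  exact absurd (hs j) hj

theorem lqnPsi_eq_zero_of_color_ne {V : Type*} [Fintype V] [DecidableEq V]
    (E : V → V → Prop) (C : V → V → Bool) (T : V → V → ℂ) (j : V) (c : Bool)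
    (h : ∀ a : V, (∃ σ : Equiv.Perm V, (∀ b, E b (σ b)) ∧ σ a = j) → C a j = c)
    (s : V → Bool) (hs : s j ≠ c) :
    lqnPsi E C T s = 0 :=
  lqnPsi_eq_zero_of_no_matching E C T s fun σ hσ =>
    ⟨j, by rwa [h (σ⁻¹ j) ⟨σ, hσ, σ.apply_symm_apply j⟩, ne_comm]⟩

theorem lqn_lemma1_amplitude_general (N : ℕ)
    (E : Fin N → Fin N → Prop) (C : Fin N → Fin N → Bool)
    (T : Fin N → Fin N → ℂ)
    (j : Fin N) (c : Bool)
    (h : ∀ a : Fin N,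
      (∃ σ : Equiv.Perm (Fin N), (∀ b, E b (σ b)) ∧ σ a = j) → C a j = c) :
    ∀ s : Fin N → Bool, s j ≠ c → lqnPsi E C T s = 0 :=
  lqnPsi_eq_zero_of_color_ne E C T j c h

/-- Lemma 1, amplitude form: If every maximally matchable edge `(a, j)`
has color `c`, then the postselected coefficient function vanishes on every string `s`
with `s j ≠ c`: the subsystem at detector `j` takes the definite value `c`. -/
theorem lqn_lemma1_amplitude (N : ℕ) (hN : 1 ≤ N)
    (E : Fin N → Fin N → Prop) (C : Fin N → Fin N → Bool)
    (T : Fin N → Fin N → ℂ) (hT : ∀ a j, T a j ≠ 0 ↔ E a j)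
    (j : Fin N) (c : Bool)
    (h : ∀ a : Fin N,
      (∃ σ : Equiv.Perm (Fin N), (∀ b, E b (σ b)) ∧ σ a = j) → C a j = c) :
    ∀ s : Fin N → Bool, s j ≠ c → lqnPsi E C T s = 0 :=
  lqn_lemma1_amplitude_general N E C T j c h
end

section
/- (Lemma 2) Let N ≥ 1, k ≥ 1, and let E : Fin N → Fin N → Prop, C : Fin N → Fin N → Bool, T : Fin N → Fin N → ℂ with T a j ≠ 0 ↔ E a j, and let Ψ be the postselected coefficient function. Suppose P : Fin N → Fin k is such that every maximally matchable edge (a, j) of E satisfies P a = P j (the PM diagram is disconnected into the parts of P). Then (1) every perfect matching σ of E satisfies P (σ a) = P a for all a, and (2) there exist functions f_i : (Fin N → Bool) → ℂ for i : Fin k, where each f_i s depends only on the values s j with P j = i, such that Ψ s = ∏_{i : Fin k} f_i s for all s; i.e., the postselected state is k-separable under the partition induced by P. -/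
/-!
Every perfect matching maps each part of `P` onto itself, and permutations preserving `P` are
the same as families of permutations of its fibres (`DomMulAct.stabilizerMulEquiv`). Perfect
matchings of `E` with outcome string `s` therefore correspond to families of perfect matchings of
the sub-networks on the parts, each with the restricted outcome string, and the weight splits as a
product over the parts. Hence `Ψ` is the product of the coefficient functions of the
sub-networks, the `i`-th of which reads `s` only on part `i`.
-/

open scoped Classical

open Equiv

namespace Equiv.Perm

variable {V ι : Type*} (P : V → ι)

def fiberwiseEquiv : {σ : Perm V // P ∘ σ = P} ≃ ∀ i, Perm {a // P a = i} :=
  (subtypeEquiv DomMulAct.mk fun _ ↦ by rw [DomMulAct.mem_stabilizer_iff]; rfl).trans <|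
    MulOpposite.opEquiv.trans (DomMulAct.stabilizerMulEquiv P).toEquiv

variable {P}

theorem fiberwiseEquiv_symm_apply (τ : ∀ i, Perm {a // P a = i}) {i : ι} (a : {a // P a = i}) :
    ((fiberwiseEquiv P).symm τ : Perm V) a = τ i a := by
  obtain ⟨a, rfl⟩ := a
  rfl

theorem fiberwiseEquiv_symm_inv_apply (τ : ∀ i, Perm {a // P a = i}) {i : ι}
    (a : {a // P a = i}) : ((fiberwiseEquiv P).symm τ : Perm V)⁻¹ a = (τ i)⁻¹ a := by
  obtain ⟨a, rfl⟩ := a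
  rfl

end Equiv.Perm

theorem forall_iff_forall_fiber {V ι : Type*} (P : V → ι) (p : V → Prop) :
    (∀ a, p a) ↔ ∀ i, ∀ a : {a // P a = i}, p a :=
  ⟨fun h _ a ↦ h a, fun h a ↦ h (P a) ⟨a, rfl⟩⟩

section Factorization

variable {V ι : Type*} [Fintype V] [DecidableEq V] [Fintype ι] [DecidableEq ι] (P : V → ι)
  (E : V → V → Prop) (C : V → V → Bool) (T : V → V → ℂ)

theorem lqnPsi_eq_prod_fiber (hE : ∀ σ : Perm V, (∀ a, E a (σ a)) → ∀ a, P (σ a) = P a)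
    (s : V → Bool) :
    lqnPsi E C T s = ∏ i, lqnPsi (fun a b : {a // P a = i} ↦ E a b) (fun a b ↦ C a b)
      (fun a b ↦ T a b) (fun j ↦ s j) := by
  set IsPMWith : Perm V → Prop := fun σ ↦ (∀ a, E a (σ a)) ∧ ∀ j, C (σ⁻¹ j) j = s j
  have hsum_preserving : lqnPsi E C T s =
      ∑ σ : {σ : Perm V // P ∘ σ = P}, if IsPMWith σ.1 then ∏ a, T a (σ.1 a) else 0 := by
    rw [lqnPsi, Finset.sum_filter,
      ← Fintype.sum_subtype_add_sum_subtype (fun σ : Perm V ↦ P ∘ σ = P),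
      Fintype.sum_eq_zero (fun σ : {σ : Perm V // ¬P ∘ σ = P} ↦ _) fun σ ↦
        if_neg fun h ↦ σ.2 (funext (hE σ h.1)), add_zero]
  rw [hsum_preserving, ← (Perm.fiberwiseEquiv P).symm.sum_comp]
  simp only [lqnPsi, Finset.sum_filter]
  rw [Fintype.prod_sum]
  refine Fintype.sum_congr _ _ fun τ ↦ ?_
  rw [Fintype.prod_ite_zero]
  set σ : Perm V := ((Perm.fiberwiseEquiv P).symm τ : Perm V)
  have hPM : (∀ a, E a (σ a)) ↔ ∀ i (a : {a // P a = i}), E a (τ i a) := by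
    simp_rw [forall_iff_forall_fiber P, σ, Perm.fiberwiseEquiv_symm_apply]
  have hout : (∀ j, C (σ⁻¹ j) j = s j) ↔
      ∀ i (j : {a // P a = i}), C ((τ i)⁻¹ j) j = s j := by
    simp_rw [forall_iff_forall_fiber P, σ, Perm.fiberwiseEquiv_symm_inv_apply]
  refine if_congr (by simp only [IsPMWith, hPM, hout, forall_and]) ?_ rfl
  simp_rw [← Fintype.prod_fiberwise P fun a ↦ T a (σ a), σ, Perm.fiberwiseEquiv_symm_apply]

end Factorization

theorem lqn_lemma2_general (N k : ℕ)
    (E : Fin N → Fin N → Prop) (C : Fin N → Fin N → Bool)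
    (T : Fin N → Fin N → ℂ)
    (P : Fin N → Fin k)
    (hP : ∀ a j : Fin N,
      (∃ σ : Equiv.Perm (Fin N), (∀ b, E b (σ b)) ∧ σ a = j) → P a = P j) :
    (∀ σ : Equiv.Perm (Fin N), (∀ a, E a (σ a)) → ∀ a, P (σ a) = P a) ∧
    (∃ f : Fin k → (Fin N → Bool) → ℂ,
      (∀ (i : Fin k) (s t : Fin N → Bool),
        (∀ j, P j = i → s j = t j) → f i s = f i t) ∧
      ∀ s : Fin N → Bool, lqnPsi E C T s = ∏ i : Fin k, f i s) := by
  have hpres : ∀ σ : Perm (Fin N), (∀ a, E a (σ a)) → ∀ a, P (σ a) = P a :=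
    fun σ hσ a ↦ (hP a (σ a) ⟨σ, hσ, rfl⟩).symm
  refine ⟨hpres, fun i s ↦ lqnPsi (fun a b : {a // P a = i} ↦ E a b) (fun a b ↦ C a b)
    (fun a b ↦ T a b) (fun j ↦ s j), fun i s t hst ↦ ?_, lqnPsi_eq_prod_fiber P E C T hpres⟩
  exact congrArg _ (funext fun j ↦ hst j j.2)

/-- Lemma 2: If `P : Fin N → Fin k` is such that every maximally matchable
edge `(a, j)` satisfies `P a = P j` (the PM diagram is disconnected into the parts of
`P`), then (1) every perfect matching preserves the parts of `P`, and (2) the postselected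
coefficient function factorizes as a product of `k` functions, the `i`-th depending only
on the coordinates in part `i`: the state is `k`-separable under `P`. -/
theorem lqn_lemma2 (N k : ℕ) (hN : 1 ≤ N) (hk : 1 ≤ k)
    (E : Fin N → Fin N → Prop) (C : Fin N → Fin N → Bool)
    (T : Fin N → Fin N → ℂ) (hT : ∀ a j, T a j ≠ 0 ↔ E a j)
    (P : Fin N → Fin k)
    (hP : ∀ a j : Fin N,
      (∃ σ : Equiv.Perm (Fin N), (∀ b, E b (σ b)) ∧ σ a = j) → P a = P j) :
    (∀ σ : Equiv.Perm (Fin N), (∀ a, E a (σ a)) → ∀ a, P (σ a) = P a) ∧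
    (∃ f : Fin k → (Fin N → Bool) → ℂ,
      (∀ (i : Fin k) (s t : Fin N → Bool),
        (∀ j, P j = i → s j = t j) → f i s = f i t) ∧
      ∀ s : Fin N → Bool, lqnPsi E C T s = ∏ i : Fin k, f i s) :=
  lqn_lemma2_general N k E C T P hP
end

section
/- Let D : V → V → Prop be a directed graph on a finite vertex type V in which every arc lies on an elementary cycle (for every u, v with D u v there exist pairwise distinct vertices i_1 = u, i_2 = v, …, i_k with D i_q i_{q+1} for all q < k and D i_k i_1; loops D u u count as cycles of length 1). Then any two vertices joined by a path in the underlying undirected graph (the reflexive–transitive closure of the symmetrized relation) are strongly connected: each is reachable from the other by a directed path (reflexive–transitive closure of D in each direction). -/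
/-! Every arc `u → v` lies on a cycle, whose remaining arcs form a directed path from `v` back
to `u`. Hence directed reachability is symmetric, so it is an equivalence relation containing
both orientations of every arc, and therefore contains weak connectivity. -/

namespace Relation

variable {α : Type*} {r : α → α → Prop}

theorem ReflTransGen.symm_of_forall_rel (hback : ∀ a b, r a b → ReflTransGen r b a) {a b : α}
    (hab : ReflTransGen r a b) : ReflTransGen r b a := by
  induction hab with
  | refl => rfl
  | tail _ hbc ih => exact (hback _ _ hbc).trans ih

theorem equivalence_reflTransGen_of_forall_rel (hback : ∀ a b, r a b → ReflTransGen r b a) :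
    Equivalence (ReflTransGen r) :=
  ⟨fun _ => .refl, ReflTransGen.symm_of_forall_rel hback, .trans⟩

theorem reflTransGen_of_isChain_cycle {u v : α} {t : List α} (hchain : (u :: v :: t).IsChain r)
    (hclose : r ((v :: t).getLast (List.cons_ne_nil _ _)) u) : ReflTransGen r v u :=
  (List.relationReflTransGen_of_exists_isChain_cons t (List.isChain_cons_cons.mp hchain).2
    rfl).tail hclose

end Relation

open Relation

theorem arcs_on_cycles_weak_implies_strong_general (V : Type*)
    (D : V → V → Prop)
    (hcyc : ∀ u v : V, D u v → ∃ l : List V, l.Nodup ∧ l.Chain' D ∧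
      (∃ h : l ≠ [], D (l.getLast h) (l.head h)) ∧
      ((u = v ∧ l = [u]) ∨ ∃ t : List V, l = u :: v :: t)) :
    ∀ u v : V, Relation.ReflTransGen (fun x y => D x y ∨ D y x) u v →
      Relation.ReflTransGen D u v ∧ Relation.ReflTransGen D v u := by
  have hback : ∀ u v, D u v → ReflTransGen D v u := by
    intro u v huv
    obtain ⟨l, -, hchain, ⟨hne, hclose⟩, ⟨rfl, rfl⟩ | ⟨t, rfl⟩⟩ := hcyc u v huv
    · rfl
    · exact reflTransGen_of_isChain_cycle hchain (by simpa using hclose)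
  have hequiv := equivalence_reflTransGen_of_forall_rel hback
  intro u v huv
  have hreach : ReflTransGen D u v :=
    reflTransGen_le_of_equivalence_of_le hequiv
      (fun a b hab => hab.elim .single (hback b a)) u v huv
  exact ⟨hreach, hequiv.symm hreach⟩

/-- Let `D` be a digraph on a finite vertex type in which every arc lies on
an elementary cycle: for every arc `D u v` there is a nodup list of vertices, either the
singleton `[u]` when `u = v` (a loop, a cycle of length 1) or of the form `u :: v :: t`,
whose consecutive vertices are joined by arcs and whose last vertex has an arc back to
its head. Then any two vertices joined by a path in the underlying undirected graph
(reflexive–transitive closure of the symmetrized relation) are strongly connected: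
each is reachable from the other by a directed path. -/
theorem arcs_on_cycles_weak_implies_strong (V : Type*) [Fintype V]
    (D : V → V → Prop)
    (hcyc : ∀ u v : V, D u v → ∃ l : List V, l.Nodup ∧ l.Chain' D ∧
      (∃ h : l ≠ [], D (l.getLast h) (l.head h)) ∧
      ((u = v ∧ l = [u]) ∨ ∃ t : List V, l = u :: v :: t)) :
    ∀ u v : V, Relation.ReflTransGen (fun x y => D x y ∨ D y x) u v →
      Relation.ReflTransGen D u v ∧ Relation.ReflTransGen D v u :=
  arcs_on_cycles_weak_implies_strong_general V D hcyc
end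

section
/- (Theorem 1, condition ii) Let N ≥ 2 and let E : Fin N → Fin N → Prop, C : Fin N → Fin N → Bool, T : Fin N → Fin N → ℂ with T a j ≠ 0 ↔ E a j, and let Ψ be the postselected coefficient function. If Ψ is genuinely entangled, then the perfect matching diagram of E — the directed graph on Fin N whose arcs are exactly the maximally matchable edges of E — is strongly connected: for any two vertices u, v, there is a directed path from u to v consisting of maximally matchable edges (v lies in the reflexive–transitive closure of the maximally-matchable arc relation starting from u). -/
/-!
Let `S` be the set of vertices reachable from `u` along maximally matchable edges. Every perfect
matching `σ` maps `S` into itself (an edge `(a, σ a)` with `a ∈ S` is maximally matchable), hence,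
`S` being finite, onto itself. So `σ` splits into a perfect matching of the subnetwork on `S` and
one of the subnetwork on its complement, with outcome string and amplitude splitting accordingly:
`Ψ` is the product of the coefficient functions of the two subnetworks and is separable across
`S`. Genuine entanglement leaves only `S = univ`.
-/

open scoped Classical

open Equiv Finset

namespace Equiv.Perm

variable {α : Type*} {p : α → Prop}

theorem forall_subtypeCongr_iff [DecidablePred p] (σ₁ : Perm {a // p a})
    (σ₂ : Perm {a // ¬p a}) (F : α → α → Prop) :
    (∀ a, F a (σ₁.subtypeCongr σ₂ a)) ↔
      (∀ a : {a // p a}, F a (σ₁ a)) ∧ ∀ a : {a // ¬p a}, F a (σ₂ a) := by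
  refine ⟨fun h => ⟨fun a => by simpa using h a, fun a => by simpa using h a⟩,
    fun ⟨h₁, h₂⟩ a => ?_⟩
  by_cases ha : p a
  · simpa [ha] using h₁ ⟨a, ha⟩
  · simpa [ha] using h₂ ⟨a, ha⟩

theorem apply_iff_of_mapsTo [Finite α] {σ : Perm α} (h : ∀ x, p x → p (σ x)) (x : α) :
    p (σ x) ↔ p x :=
  ⟨fun hx => by simpa using perm_symm_on_of_perm_on_finite h hx, h x⟩

theorem exists_subtypeCongr_eq_of_mapsTo [Finite α] [DecidablePred p] {σ : Perm α}
    (h : ∀ x, p x → p (σ x)) :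
    ∃ τ : Perm {a // p a} × Perm {a // ¬p a}, τ.1.subtypeCongr τ.2 = σ := by
  refine ⟨(σ.subtypePerm (apply_iff_of_mapsTo h),
    σ.subtypePerm fun x => not_congr (apply_iff_of_mapsTo h x)), ?_⟩
  ext a
  by_cases ha : p a <;> simp [ha]

end Equiv.Perm

section LQN

variable {V : Type*}

def IsPerfectMatching (E : V → V → Prop) (σ : Perm V) : Prop :=
  ∀ a, E a (σ a)

def IsMaximallyMatchable (E : V → V → Prop) (a j : V) : Prop :=
  ∃ σ : Perm V, IsPerfectMatching E σ ∧ σ a = j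

def IsSeparableAcross (Ψ : (V → Bool) → ℂ) (S : Set V) : Prop :=
  ∃ f g : (V → Bool) → ℂ,
    (∀ s t : V → Bool, (∀ j ∈ S, s j = t j) → f s = f t) ∧
    (∀ s t : V → Bool, (∀ j ∉ S, s j = t j) → g s = g t) ∧
    ∀ s : V → Bool, Ψ s = f s * g s

theorem perfectMatching_outcome_subtypeCongr_iff {p : V → Prop} [DecidablePred p]
    (E : V → V → Prop) (C : V → V → Bool) (s : V → Bool)
    (σ₁ : Perm {a // p a}) (σ₂ : Perm {a // ¬p a}) :
    ((∀ a, E a (σ₁.subtypeCongr σ₂ a)) ∧ ∀ j, C ((σ₁.subtypeCongr σ₂)⁻¹ j) j = s j) ↔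
      ((∀ a : {a // p a}, E a (σ₁ a)) ∧ ∀ j, C (σ₁⁻¹ j) j = s j) ∧
        ((∀ a : {a // ¬p a}, E a (σ₂ a)) ∧ ∀ j, C (σ₂⁻¹ j) j = s j) := by
  have hinv : (σ₁.subtypeCongr σ₂)⁻¹ = σ₁⁻¹.subtypeCongr σ₂⁻¹ := rfl
  rw [hinv, Perm.forall_subtypeCongr_iff σ₁ σ₂ E,
    Perm.forall_subtypeCongr_iff σ₁⁻¹ σ₂⁻¹ fun j a => C a j = s j, and_and_and_comm]

variable [Fintype V] [DecidableEq V]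

noncomputable def lqnPsiOn (p : V → Prop) [DecidablePred p]
    (E : V → V → Prop) (C : V → V → Bool) (T : V → V → ℂ) (s : V → Bool) : ℂ :=
  lqnPsi (fun a b : {x // p x} => E a b) (fun a b => C a b) (fun a b => T a b) (fun j => s j)

theorem lqnPsiOn_congr (p : V → Prop) [DecidablePred p] (E : V → V → Prop) (C : V → V → Bool)
    (T : V → V → ℂ) {s t : V → Bool} (hst : ∀ j, p j → s j = t j) :
    lqnPsiOn p E C T s = lqnPsiOn p E C T t := by
  have : (fun j : {x // p x} => s j) = fun j : {x // p x} => t j := funext fun j => hst j j.2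
  simp only [lqnPsiOn, this]

theorem lqnPsi_eq_lqnPsiOn_mul (p : V → Prop) [DecidablePred p] (E : V → V → Prop)
    (C : V → V → Bool) (T : V → V → ℂ)
    (hp : ∀ σ, IsPerfectMatching E σ → ∀ a, p a → p (σ a)) (s : V → Bool) :
    lqnPsi E C T s = lqnPsiOn p E C T s * lqnPsiOn (¬p ·) E C T s := by
  rw [lqnPsiOn, lqnPsiOn, lqnPsi, lqnPsi, lqnPsi, sum_mul_sum, ← sum_product']
  symm
  refine sum_nbij (fun τ => Perm.subtypeCongr τ.1 τ.2) (fun τ hτ => ?_)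
    (Perm.subtypeCongrHom_injective p).injOn (fun σ hσ => ?_) (fun τ _ => ?_)
  · simp only [mem_product, mem_filter, mem_univ, true_and] at hτ ⊢
    exact (perfectMatching_outcome_subtypeCongr_iff E C s τ.1 τ.2).2 hτ
  · simp only [coe_filter, mem_univ, true_and, Set.mem_ofPred_eq] at hσ
    obtain ⟨τ, rfl⟩ := Perm.exists_subtypeCongr_eq_of_mapsTo (hp σ hσ.1)
    refine ⟨τ, ?_, rfl⟩
    simpa [mem_product] using (perfectMatching_outcome_subtypeCongr_iff E C s τ.1 τ.2).1 hσ
  · rw [← Fintype.prod_subtype_mul_prod_subtype p]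
    simp

theorem lqnPsi_isSeparableAcross (S : Set V) (E : V → V → Prop) (C : V → V → Bool)
    (T : V → V → ℂ) (hS : ∀ σ, IsPerfectMatching E σ → ∀ a ∈ S, σ a ∈ S) :
    IsSeparableAcross (lqnPsi E C T) S :=
  ⟨lqnPsiOn (· ∈ S) E C T, lqnPsiOn (· ∉ S) E C T, fun _ _ => lqnPsiOn_congr _ E C T,
    fun _ _ => lqnPsiOn_congr _ E C T, lqnPsi_eq_lqnPsiOn_mul _ E C T hS⟩

end LQN

theorem lqn_thm1_strongly_connected_general (N : ℕ)
    (E : Fin N → Fin N → Prop) (C : Fin N → Fin N → Bool)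
    (T : Fin N → Fin N → ℂ)
    (hgen : ∀ S : Set (Fin N), S.Nonempty → S ≠ Set.univ →
      ¬ ∃ f g : (Fin N → Bool) → ℂ,
        (∀ s t : Fin N → Bool, (∀ j ∈ S, s j = t j) → f s = f t) ∧
        (∀ s t : Fin N → Bool, (∀ j ∉ S, s j = t j) → g s = g t) ∧
        ∀ s : Fin N → Bool, lqnPsi E C T s = f s * g s) :
    ∀ u v : Fin N,
      Relation.ReflTransGen
        (fun a j => ∃ σ : Equiv.Perm (Fin N), (∀ x, E x (σ x)) ∧ σ a = j) u v := by
  intro u v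
  by_contra huv
  let S : Set (Fin N) := {w | Relation.ReflTransGen (IsMaximallyMatchable E) u w}
  have hS : ∀ σ, IsPerfectMatching E σ → ∀ a ∈ S, σ a ∈ S :=
    fun σ hσ _ ha => Relation.ReflTransGen.tail ha ⟨σ, hσ, rfl⟩
  exact hgen S ⟨u, .refl⟩ ((Set.ne_univ_iff_exists_notMem S).2 ⟨v, huv⟩)
    (lqnPsi_isSeparableAcross S E C T hS)

/-- Theorem 1, condition ii: If the postselected coefficient function `Ψ`
is genuinely entangled (nonzero and not separable across any bipartition
`∅ ⊊ S ⊊ Fin N`), then the perfect matching diagram — the digraph whose arcs are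
exactly the maximally matchable edges of `E` — is strongly connected: every vertex `v`
lies in the reflexive–transitive closure of the maximally-matchable arc relation
starting from any vertex `u`. -/
theorem lqn_thm1_strongly_connected (N : ℕ) (hN : 2 ≤ N)
    (E : Fin N → Fin N → Prop) (C : Fin N → Fin N → Bool)
    (T : Fin N → Fin N → ℂ) (hT : ∀ a j, T a j ≠ 0 ↔ E a j)
    (hΨ : lqnPsi E C T ≠ 0)
    (hgen : ∀ S : Set (Fin N), S.Nonempty → S ≠ Set.univ →
      ¬ ∃ f g : (Fin N → Bool) → ℂ,
        (∀ s t : Fin N → Bool, (∀ j ∈ S, s j = t j) → f s = f t) ∧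
        (∀ s t : Fin N → Bool, (∀ j ∉ S, s j = t j) → g s = g t) ∧
        ∀ s : Fin N → Bool, lqnPsi E C T s = f s * g s) :
    ∀ u v : Fin N,
      Relation.ReflTransGen
        (fun a j => ∃ σ : Equiv.Perm (Fin N), (∀ x, E x (σ x)) ∧ σ a = j) u v :=
  lqn_thm1_strongly_connected_general N E C T hgen
end

section
/- (GHZ construction: perfect matching count) Let N ≥ 2 and consider the edge relation E on ZMod N given by E a j ↔ (j = a ∨ j = a + 1) (all loops together with one directed Hamiltonian cycle). The perfect matchings of E — permutations σ of ZMod N with σ a ∈ {a, a+1} for every a — are exactly two: the identity and the translation a ↦ a + 1. -/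
/-- GHZ construction: perfect matching count: On `ZMod N` (`N ≥ 2`) with
edge relation `E a j ↔ (j = a ∨ j = a + 1)` (all loops plus one directed Hamiltonian
cycle), the perfect matchings — permutations `σ` with `σ a ∈ {a, a + 1}` for every `a` —
are exactly two: the identity and the translation `a ↦ a + 1`. -/
theorem ghz_pm_count (N : ℕ) (hN : 2 ≤ N) :
    ({σ : Equiv.Perm (ZMod N) | ∀ a, σ a = a ∨ σ a = a + 1} =
      {Equiv.refl (ZMod N), Equiv.addRight (1 : ZMod N)}) ∧
    Equiv.refl (ZMod N) ≠ Equiv.addRight (1 : ZMod N) := by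
  haveI : Fact (1 < N) := ⟨hN⟩
  have hone : (1 : ZMod N) ≠ 0 := one_ne_zero
  constructor
  · ext σ
    simp only [Set.mem_setOf_eq, Set.mem_insert_iff, Set.mem_singleton_iff]
    constructor
    · intro h
      -- propagation: σ a = a + 1 → σ (a+1) = a+1+1
      have prop : ∀ a : ZMod N, σ a = a + 1 → σ (a + 1) = a + 1 + 1 := by
        intro a ha
        rcases h (a + 1) with h1 | h1
        · exfalso
          have heq : a + 1 = a := σ.injective (h1.trans ha.symm)
          exact hone (by simpa using congrArg (· - a) heq)
        · exact h1
      have propn : ∀ (a : ZMod N), σ a = a + 1 → ∀ n : ℕ, σ (a + n) = a + n + 1 := by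
        intro a ha n
        induction n with
        | zero => simpa using ha
        | succ k ih =>
            have := prop (a + k) ih
            push_cast
            push_cast at this
            convert this using 2 <;> ring
      rcases h 0 with h0 | h0
      · left
        ext b
        rcases h b with hb | hb
        · simpa using hb
        · exfalso
          have := propn b hb (-b).val
          rw [ZMod.natCast_val, ZMod.cast_id, add_neg_cancel] at this
          rw [h0] at this
          exact hone (by simpa using this.symm)
      · right
        ext b
        have := propn 0 h0 b.val
        rw [ZMod.natCast_val, ZMod.cast_id, zero_add] at this
        simpa using this
    · rintro (rfl | rfl) a
      · exact Or.inl rfl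
      · exact Or.inr rfl
  · intro h
    have := congrArg (fun e => e 0) h
    simp at this
end

section
/- (GHZ class generation) Let N ≥ 2, let c : ZMod N → Bool be any color assignment, and consider the LQN on ZMod N with edge relation E a j ↔ (j = a ∨ j = a + 1), colors C a a = c a and C a (a+1) = ¬(c (a+1)), and any amplitudes T : ZMod N → ZMod N → ℂ with T a j ≠ 0 ↔ E a j. Then the postselected coefficient function satisfies Ψ c = ∏_{a} T a a, Ψ (fun a => ¬ c a) = ∏_{a} T a (a+1), and Ψ s = 0 for every other s : ZMod N → Bool; i.e., the postselected state is the GHZ-class state (∏_a T a a)|c⟩ + (∏_a T a (a+1))|c ⊕ 1⟩. -/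
open scoped Classical

lemma ghz_key (N : ℕ) [NeZero N] (hN : 2 ≤ N) (σ : Equiv.Perm (ZMod N))
    (h : ∀ a, σ a = a ∨ σ a = a + 1) :
    σ = 1 ∨ σ = Equiv.addRight (1 : ZMod N) := by
  have h10 : (1 : ZMod N) ≠ 0 := by
    haveI : Fact (1 < N) := ⟨hN⟩
    exact one_ne_zero
  by_cases hex : ∃ a, σ a = a + 1
  · right
    obtain ⟨a, ha⟩ := hex
    have H : ∀ k : ℕ, σ (a + k) = a + k + 1 := by
      intro k
      induction k with
      | zero => simpa using ha
      | succ k ih =>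
        push_cast
        rcases h (a + (k + 1 : ZMod N)) with h1 | h1
        · exfalso
          have : a + (k : ZMod N) = a + ((k : ZMod N) + 1) := σ.injective (by
            rw [ih, h1]; ring_nf)
          apply h10
          linear_combination - sub_eq_zero_of_eq this
        · rw [h1]
    ext b
    have hb : a + ((b - a).val : ZMod N) = b := by
      rw [ZMod.natCast_val, ZMod.cast_id]; ring
    have := H (b - a).val
    rw [hb] at this
    simpa using this
  · left
    push_neg at hex
    ext b
    rcases h b with h1 | h1
    · simpa using h1
    · exact absurd h1 (hex b)

/-- GHZ class generation: On `ZMod N` (`N ≥ 2`), with edge relation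
`E a j ↔ (j = a ∨ j = a + 1)`, colors `C a a = c a` and `C a (a+1) = ¬ c (a+1)`, and any
amplitudes supported exactly on the edges, the postselected coefficient function is:
`Ψ c = Π_a T a a`, `Ψ (¬c) = Π_a T a (a+1)`, and `Ψ s = 0` for all other strings `s`;
i.e. the postselected state is the GHZ-class state
`(Π_a T a a)|c⟩ + (Π_a T a (a+1))|c ⊕ 1⟩`. -/
theorem ghz_class_generation (N : ℕ) [NeZero N] (hN : 2 ≤ N)
    (c : ZMod N → Bool)
    (E : ZMod N → ZMod N → Prop)
    (hE : ∀ a j, E a j ↔ (j = a ∨ j = a + 1))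
    (C : ZMod N → ZMod N → Bool)
    (hC1 : ∀ a, C a a = c a)
    (hC2 : ∀ a, C a (a + 1) = !(c (a + 1)))
    (T : ZMod N → ZMod N → ℂ)
    (hT : ∀ a j, T a j ≠ 0 ↔ E a j) :
    (lqnPsi E C T c = ∏ a, T a a) ∧
    (lqnPsi E C T (fun a => !(c a)) = ∏ a, T a (a + 1)) ∧
    (∀ s : ZMod N → Bool, s ≠ c → s ≠ (fun a => !(c a)) → lqnPsi E C T s = 0) := by
  have hid : ∀ j, C ((1 : Equiv.Perm (ZMod N))⁻¹ j) j = c j := by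
    intro j; simp [hC1]
  have hsh : ∀ j, C ((Equiv.addRight (1 : ZMod N))⁻¹ j) j = !(c j) := by
    intro j
    have h1 : (Equiv.addRight (1 : ZMod N))⁻¹ j = j - 1 := by
      simp [Equiv.Perm.inv_def, sub_eq_add_neg]
    rw [h1]
    have := hC2 (j - 1)
    simpa using this
  have hmem : ∀ (s : ZMod N → Bool) (σ : Equiv.Perm (ZMod N)),
      σ ∈ Finset.univ.filter (fun σ : Equiv.Perm (ZMod N) =>
        (∀ a, E a (σ a)) ∧ ∀ j, C (σ⁻¹ j) j = s j) ↔
      ((σ = 1 ∧ c = s) ∨ (σ = Equiv.addRight (1 : ZMod N) ∧ (fun a => !(c a)) = s)) := by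
    intro s σ
    simp only [Finset.mem_filter, Finset.mem_univ, true_and]
    constructor
    · rintro ⟨h1, h2⟩
      rcases ghz_key N hN σ (fun a => (hE a (σ a)).1 (h1 a)) with rfl | rfl
      · exact Or.inl ⟨rfl, funext fun j => (hid j).symm.trans (h2 j)⟩
      · exact Or.inr ⟨rfl, funext fun j => (hsh j).symm.trans (h2 j)⟩
    · rintro (⟨rfl, rfl⟩ | ⟨rfl, rfl⟩)
      · exact ⟨fun a => (hE a a).2 (Or.inl rfl), hid⟩
      · exact ⟨fun a => (hE a _).2 (Or.inr (by simp)), hsh⟩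
  have hnot : (fun a => !(c a)) ≠ c := by
    intro h
    have := congrFun h 0
    simp at this
  refine ⟨?_, ?_, ?_⟩
  · rw [lqnPsi, show Finset.univ.filter (fun σ : Equiv.Perm (ZMod N) =>
        (∀ a, E a (σ a)) ∧ ∀ j, C (σ⁻¹ j) j = c j) = {1} by
      ext σ; rw [hmem]; simp [hnot]]
    simp
  · rw [lqnPsi, show Finset.univ.filter (fun σ : Equiv.Perm (ZMod N) =>
        (∀ a, E a (σ a)) ∧ ∀ j, C (σ⁻¹ j) j = !(c j)) = {Equiv.addRight (1 : ZMod N)} by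
      ext σ; rw [hmem]; have hnot' : c ≠ fun a => !c a := Ne.symm hnot; simp [hnot']]
    simp
  · intro s hs1 hs2
    rw [lqnPsi, show Finset.univ.filter (fun σ : Equiv.Perm (ZMod N) =>
        (∀ a, E a (σ a)) ∧ ∀ j, C (σ⁻¹ j) j = s j) = ∅ by
      ext σ; rw [hmem]; have h1 : c ≠ s := Ne.symm hs1
      have h2 : (fun a => !c a) ≠ s := Ne.symm hs2
      simp [h1, h2]]
    simp
end

section
/- (W construction, star form) Let N ≥ 2 and consider the edge relation E on Fin N given by E a j ↔ (a = j ∨ a = 0 ∨ j = 0), with colors C a j = false if a = 0 and C a j = true if a ≠ 0. Then: (1) the perfect matchings of E are exactly the identity together with the transpositions Equiv.swap 0 k for k ≠ 0, so there are exactly N perfect matchings; (2) the outcome string of the identity is false exactly at coordinate 0 and the outcome string of Equiv.swap 0 k is false exactly at coordinate k; hence the outcome strings of the perfect matchings are exactly the N strings with a single false coordinate, each arising from exactly one perfect matching (the N-partite W state). -/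
/-!
Every perfect matching `σ` of the star graph centred at `o` is the transposition
`swap o (σ o)`: a non-central vertex `a` can only go to itself or to `o`, and the only vertex
sent to `o` is `σ o`, because `σ o` itself cannot stay fixed. So the perfect matchings are
indexed by `σ o`. Since only the particle at `o` carries the colour `false`, the outcome
string of `σ` is `false` exactly at the detector `σ o` reached by that particle, which makes
the outcome map a bijection onto the strings with a single `false` coordinate.
-/

open Equiv Finset

namespace StarNetwork

variable {α : Type*}

def starAdj (o a j : α) : Prop := a = j ∨ a = o ∨ j = o

def outcome (C : α → α → Bool) (σ : Perm α) (j : α) : Bool := C (σ⁻¹ j) j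

section Matchings

variable [DecidableEq α] {o : α}

theorem starAdj_swap_apply (o k a : α) : starAdj o a (swap o k a) := by
  unfold starAdj
  rw [swap_apply_def]
  split_ifs <;> simp_all

theorem eq_swap_of_forall_starAdj {σ : Perm α} (h : ∀ a, starAdj o a (σ a)) :
    σ = swap o (σ o) := by
  have h_noncentral : ∀ a, a ≠ o → σ a = a ∨ σ a = o := fun a ha => by
    simpa [starAdj, ha, eq_comm] using h a
  ext a
  by_cases ha : a = o
  · simp [ha]
  rcases h_noncentral a ha with hfix | hcentre
  · have hak : a ≠ σ o := fun hak => ha (σ.injective (hfix.trans hak))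
    rw [hfix, swap_apply_of_ne_of_ne ha hak]
  · have hk : σ o ≠ o := fun hk => ha (σ.injective (hcentre.trans hk.symm))
    have hσk : σ (σ o) = o := (h_noncentral (σ o) hk).resolve_left fun hσk =>
      hk (σ.injective hσk)
    rw [hcentre, ← σ.injective (hcentre.trans hσk.symm), swap_apply_right]

theorem forall_starAdj_iff {σ : Perm α} : (∀ a, starAdj o a (σ a)) ↔ σ = swap o (σ o) :=
  ⟨eq_swap_of_forall_starAdj, fun h a => h ▸ starAdj_swap_apply o (σ o) a⟩

theorem setOf_forall_starAdj :
    {σ : Perm α | ∀ a, starAdj o a (σ a)} =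
      {Equiv.refl α} ∪ {σ : Perm α | ∃ k, k ≠ o ∧ σ = swap o k} := by
  ext σ
  simp only [Set.mem_ofPred_eq, Set.mem_union, Set.mem_singleton_iff, forall_starAdj_iff]
  constructor
  · intro h
    by_cases h0 : σ o = o
    · exact Or.inl (by rw [h, h0, swap_self])
    · exact Or.inr ⟨σ o, h0, h⟩
  · rintro (rfl | ⟨k, -, rfl⟩)
    · simp
    · rw [swap_apply_left]

theorem card_filter_forall_starAdj [Fintype α] (o : α)
    [DecidablePred fun σ : Perm α => ∀ a, starAdj o a (σ a)] :
    (univ.filter fun σ : Perm α => ∀ a, starAdj o a (σ a)).card = Fintype.card α := by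
  have himage : univ.filter (fun σ : Perm α => ∀ a, starAdj o a (σ a)) =
      univ.image (swap o) := by
    ext σ
    simp only [mem_filter, mem_univ, true_and, mem_image, forall_starAdj_iff]
    exact ⟨fun h => ⟨σ o, h.symm⟩, by rintro ⟨k, rfl⟩; rw [swap_apply_left]⟩
  rw [himage, card_image_of_injective _ (swap_injective_of_left o), card_univ]

end Matchings

section Outcomes

variable {o : α} {C : α → α → Bool}

theorem outcome_eq_false_iff (hC : ∀ a j, C a j = false ↔ a = o) (σ : Perm α) (j : α) :
    outcome C σ j = false ↔ j = σ o := by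
  rw [outcome, hC, Perm.inv_eq_iff_eq]

theorem bijOn_outcome [DecidableEq α] [Fintype α] (hC : ∀ a j, C a j = false ↔ a = o) :
    Set.BijOn (outcome C) {σ : Perm α | ∀ a, starAdj o a (σ a)}
      {s : α → Bool | (univ.filter fun j => s j = false).card = 1} := by
  have hfalse : ∀ σ, univ.filter (fun j => outcome C σ j = false) = {σ o} := fun σ => by
    ext j
    simp [outcome_eq_false_iff hC]
  refine ⟨fun σ _ => by simp [hfalse], fun σ hσ τ hτ hστ => ?_, fun s hs => ?_⟩
  · have h0 : σ o = τ o := by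
      rw [← outcome_eq_false_iff hC, ← hστ, outcome_eq_false_iff hC]
    rw [Set.mem_ofPred_eq, forall_starAdj_iff] at hσ hτ
    rw [hσ, hτ, h0]
  · obtain ⟨c, hc⟩ := card_eq_one.mp hs
    refine ⟨swap o c, by rw [Set.mem_ofPred_eq, forall_starAdj_iff, swap_apply_left], ?_⟩
    funext j
    have hj : outcome C (swap o c) j = false ↔ s j = false := by
      rw [outcome_eq_false_iff hC, swap_apply_left, ← mem_singleton, ← hc]
      simp
    simpa using hj

end Outcomes

end StarNetwork

open scoped Classical

open StarNetwork in
theorem w_star_construction_general (N : ℕ) [NeZero N]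
    (E : Fin N → Fin N → Prop)
    (hE : ∀ a j, E a j ↔ (a = j ∨ a = 0 ∨ j = 0))
    (C : Fin N → Fin N → Bool)
    (hC : ∀ a j, C a j = if a = 0 then false else true) :
    ({σ : Equiv.Perm (Fin N) | ∀ a, E a (σ a)} =
      {Equiv.refl (Fin N)} ∪
        {σ : Equiv.Perm (Fin N) | ∃ k : Fin N, k ≠ 0 ∧ σ = Equiv.swap 0 k}) ∧
    ((Finset.univ.filter
      (fun σ : Equiv.Perm (Fin N) => ∀ a, E a (σ a))).card = N) ∧
    (∀ j : Fin N, C ((Equiv.refl (Fin N))⁻¹ j) j = false ↔ j = 0) ∧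
    (∀ k : Fin N, k ≠ 0 →
      ∀ j : Fin N, C ((Equiv.swap 0 k)⁻¹ j) j = false ↔ j = k) ∧
    Set.BijOn (fun σ : Equiv.Perm (Fin N) => fun j => C (σ⁻¹ j) j)
      {σ : Equiv.Perm (Fin N) | ∀ a, E a (σ a)}
      {s : Fin N → Bool | (Finset.univ.filter (fun j => s j = false)).card = 1} := by
  obtain rfl : E = starAdj 0 := by
    ext a j
    exact hE a j
  have hC' : ∀ a j, C a j = false ↔ a = 0 := fun a j => by simp [hC]
  refine ⟨setOf_forall_starAdj, ?_, fun j => ?_, fun k _ j => ?_, bijOn_outcome hC'⟩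
  · rw [card_filter_forall_starAdj, Fintype.card_fin]
  · exact outcome_eq_false_iff hC' 1 j
  · exact (outcome_eq_false_iff hC' (swap 0 k) j).trans (by rw [swap_apply_left])

/-- W construction, star form: On `Fin N` (`N ≥ 2`) with edge relation
`E a j ↔ (a = j ∨ a = 0 ∨ j = 0)` and colors `C a j = false` iff `a = 0`:
(1) the perfect matchings of `E` are exactly the identity together with the
transpositions `swap 0 k` for `k ≠ 0`, so there are exactly `N` of them;
(2) the outcome string of the identity is `false` exactly at coordinate `0` and that of
`swap 0 k` is `false` exactly at coordinate `k`; hence the outcome-string map is a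
bijection from the perfect matchings onto the `N` strings with a single `false`
coordinate (the `N`-partite W state). -/
theorem w_star_construction (N : ℕ) [NeZero N] (hN : 2 ≤ N)
    (E : Fin N → Fin N → Prop)
    (hE : ∀ a j, E a j ↔ (a = j ∨ a = 0 ∨ j = 0))
    (C : Fin N → Fin N → Bool)
    (hC : ∀ a j, C a j = if a = 0 then false else true) :
    ({σ : Equiv.Perm (Fin N) | ∀ a, E a (σ a)} =
      {Equiv.refl (Fin N)} ∪
        {σ : Equiv.Perm (Fin N) | ∃ k : Fin N, k ≠ 0 ∧ σ = Equiv.swap 0 k}) ∧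
    ((Finset.univ.filter
      (fun σ : Equiv.Perm (Fin N) => ∀ a, E a (σ a))).card = N) ∧
    (∀ j : Fin N, C ((Equiv.refl (Fin N))⁻¹ j) j = false ↔ j = 0) ∧
    (∀ k : Fin N, k ≠ 0 →
      ∀ j : Fin N, C ((Equiv.swap 0 k)⁻¹ j) j = false ↔ j = k) ∧
    Set.BijOn (fun σ : Equiv.Perm (Fin N) => fun j => C (σ⁻¹ j) j)
      {σ : Equiv.Perm (Fin N) | ∀ a, E a (σ a)}
      {s : Fin N → Bool | (Finset.univ.filter (fun j => s j = false)).card = 1} :=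
  w_star_construction_general N E hE C hC
end

section
/- (W construction, chain form) Let N ≥ 2 and consider the edge relation E on Fin N given by E a j ↔ (a = j ∨ a = 0 ∨ (a ≠ 0 ∧ (j : ℕ) + 1 = (a : ℕ))), with colors C a j = false if a = 0 and C a j = true if a ≠ 0. Then: (1) the perfect matchings of E are exactly the identity together with, for each k ≠ 0, the permutation σ_k defined by σ_k 0 = k, σ_k a = a − 1 for 1 ≤ a ≤ k, and σ_k a = a for a > k; so there are exactly N perfect matchings; (2) the outcome string of the identity is false exactly at coordinate 0 and the outcome string of σ_k is false exactly at coordinate k; hence the outcome strings of the perfect matchings are exactly the N strings with a single false coordinate, each arising from exactly one perfect matching (the N-partite W state). -/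
open scoped Classical

/-! A perfect matching `σ` of the chain is pinned down by `k = σ 0`: once particle `0` occupies
detector `k`, particles `1, …, k` are forced to step down by one and every particle beyond `k`
to stay put, so `σ = (Fin.cycleRange k)⁻¹`. Only particle `0` has red edges, so the outcome
string of `σ` is red exactly at detector `σ 0`; hence `k ↦ (Fin.cycleRange k)⁻¹` lists the `N`
perfect matchings, and their outcome strings are the `N` strings with a single red entry. -/

open Equiv Finset

namespace LinearQuantumNetwork

section Outcome

variable {α : Type*}

def IsPerfectMatching (E : α → α → Prop) (σ : Perm α) : Prop := ∀ a, E a (σ a)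

def outcome (C : α → α → Bool) (σ : Perm α) (j : α) : Bool := C (σ⁻¹ j) j

variable {C : α → α → Bool} {a₀ : α}

theorem outcome_eq_false_iff (hC : ∀ a j, C a j = false ↔ a = a₀) (σ : Perm α) (j : α) :
    outcome C σ j = false ↔ j = σ a₀ := by
  rw [outcome, hC, Perm.inv_eq_iff_eq]

theorem filter_outcome_eq_false [Fintype α] (hC : ∀ a j, C a j = false ↔ a = a₀)
    (σ : Perm α) : univ.filter (fun j => outcome C σ j = false) = {σ a₀} := by
  ext j
  simp [outcome_eq_false_iff hC]

theorem outcome_eq_of_eq_false_iff (hC : ∀ a j, C a j = false ↔ a = a₀) {σ : Perm α}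
    {s : α → Bool} (hs : ∀ j, s j = false ↔ j = σ a₀) : outcome C σ = s := by
  funext j
  rw [Bool.eq_iff_iff, ← Bool.not_eq_false, ← Bool.not_eq_false, outcome_eq_false_iff hC, hs]

end Outcome

section CycleRange

variable {N : ℕ} [NeZero N] {σ : Perm (Fin N)}

theorem cycleRange_inv_apply_zero (k : Fin N) : (Fin.cycleRange k)⁻¹ 0 = k :=
  Fin.cycleRange_symm_zero k

theorem eq_cycleRange_inv_iff {k : Fin N} :
    σ = (Fin.cycleRange k)⁻¹ ↔ σ 0 = k ∧
      (∀ a : Fin N, a ≠ 0 → (a : ℕ) ≤ k → (σ a : ℕ) + 1 = a) ∧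
      ∀ a : Fin N, (k : ℕ) < a → σ a = a := by
  constructor
  · rintro rfl
    refine ⟨cycleRange_inv_apply_zero k, fun a ha hak => ?_, fun a hka => ?_⟩
    · set b := (Fin.cycleRange k)⁻¹ a
      have hb : Fin.cycleRange k b = a := Perm.eq_inv_iff_eq.mp rfl
      rcases lt_trichotomy b k with hbk | hbk | hkb
      · rw [← hb, Fin.coe_cycleRange_of_lt hbk]
      · rw [hbk, Fin.cycleRange_self] at hb
        exact absurd hb.symm ha
      · rw [Fin.cycleRange_of_gt hkb] at hb
        exact absurd hkb (by rw [hb, Fin.lt_def]; omega)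
    · rw [Perm.inv_eq_iff_eq, Fin.cycleRange_of_gt (Fin.lt_def.mpr hka)]
  · rintro ⟨h0, hle, hgt⟩
    ext1 a
    rw [Perm.eq_inv_iff_eq]
    rcases eq_or_ne a 0 with rfl | ha
    · rw [h0, Fin.cycleRange_self]
    rcases le_or_gt (a : ℕ) k with hak | hka
    · have := hle a ha hak
      ext
      rw [Fin.coe_cycleRange_of_lt (Fin.lt_def.mpr (by omega)), this]
    · rw [hgt a hka, Fin.cycleRange_of_gt (Fin.lt_def.mpr hka)]

end CycleRange

section Chain

variable {N : ℕ} [NeZero N] {σ : Perm (Fin N)}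

def ChainEdge (a j : Fin N) : Prop := a = j ∨ a = 0 ∨ (a ≠ 0 ∧ (j : ℕ) + 1 = a)

/- Upward induction: a particle `a > σ 0` stepping down onto `a - 1` collides with particle `0`
or with particle `a - 1`, which stays put. -/
theorem chain_apply_eq_self_of_lt (hσ : IsPerfectMatching ChainEdge σ) (a : Fin N)
    (ha : (σ 0 : ℕ) < a) : σ a = a := by
  induction a using WellFoundedLT.induction with
  | _ a ih =>
  rcases hσ a with h | rfl | ⟨-, h⟩
  · exact h.symm
  · exact absurd ha (Nat.not_lt_zero _)
  · have hne : σ a ≠ σ 0 := fun h0 => by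
      rw [σ.injective h0] at ha
      exact absurd ha (Nat.not_lt_zero _)
    have hfix : σ (σ a) = σ a := ih _ (Fin.lt_def.mpr (by omega)) (by
      have : (σ a : ℕ) ≠ σ 0 := Fin.val_ne_of_ne hne
      omega)
    have := σ.injective hfix
    omega

/- Downward induction from `σ 0`: a particle `a` that stays put collides with particle `0` if
`a = σ 0`, and otherwise with particle `a + 1`, which steps down onto `a`. -/
theorem chain_val_apply_add_one_of_le (hσ : IsPerfectMatching ChainEdge σ) (a : Fin N)
    (ha : a ≠ 0) (hak : (a : ℕ) ≤ σ 0) : (σ a : ℕ) + 1 = a := by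
  induction a using WellFoundedGT.induction with
  | _ a ih =>
  rcases hσ a with h | h | ⟨-, h⟩
  · have hlt : (a : ℕ) < σ 0 := lt_of_le_of_ne hak fun h0 =>
      ha (σ.injective (by rw [← h, Fin.ext h0]))
    obtain ⟨b, hb⟩ : ∃ b : Fin N, (b : ℕ) = a + 1 := ⟨⟨a + 1, by omega⟩, rfl⟩
    have := ih b (Fin.lt_def.mpr (by omega)) (fun hb0 => by simp [hb0] at hb) (by omega)
    have hab : σ b = σ a := Fin.ext (by rw [← h]; omega)
    have := σ.injective hab
    omega
  · exact absurd h ha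
  · exact h

theorem isPerfectMatching_chainEdge_iff :
    IsPerfectMatching ChainEdge σ ↔ σ = (Fin.cycleRange (σ 0))⁻¹ := by
  refine ⟨fun hσ => eq_cycleRange_inv_iff.mpr ⟨rfl, chain_val_apply_add_one_of_le hσ,
    chain_apply_eq_self_of_lt hσ⟩, fun h a => ?_⟩
  obtain ⟨-, hle, hgt⟩ := eq_cycleRange_inv_iff.mp h
  rcases eq_or_ne a 0 with rfl | ha
  · exact Or.inr (Or.inl rfl)
  rcases le_or_gt (a : ℕ) (σ 0) with hak | hka
  · exact Or.inr (Or.inr ⟨ha, hle a ha hak⟩)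
  · exact Or.inl (hgt a hka).symm

theorem isPerfectMatching_cycleRange_inv (k : Fin N) :
    IsPerfectMatching ChainEdge (Fin.cycleRange k)⁻¹ := by
  rw [isPerfectMatching_chainEdge_iff, cycleRange_inv_apply_zero]

theorem isPerfectMatching_chainEdge_iff_eq_one_or :
    IsPerfectMatching ChainEdge σ ↔ σ = 1 ∨ ∃ k : Fin N, k ≠ 0 ∧ σ 0 = k ∧
      (∀ a : Fin N, a ≠ 0 → (a : ℕ) ≤ k → (σ a : ℕ) + 1 = a) ∧
      ∀ a : Fin N, (k : ℕ) < a → σ a = a := by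
  rw [isPerfectMatching_chainEdge_iff]
  constructor
  · intro h
    by_cases h0 : σ 0 = 0
    · rw [h0, Fin.cycleRange_zero, inv_one] at h
      exact Or.inl h
    · exact Or.inr ⟨σ 0, h0, eq_cycleRange_inv_iff.mp h⟩
  · rintro (rfl | ⟨k, -, hk⟩)
    · simp
    · rw [hk.1]
      exact eq_cycleRange_inv_iff.mpr hk

theorem card_isPerfectMatching_chainEdge :
    (univ.filter (IsPerfectMatching (ChainEdge (N := N)))).card = N := by
  calc _ = (univ : Finset (Fin N)).card :=
        card_nbij' (fun σ => σ 0) (fun k => (Fin.cycleRange k)⁻¹) (fun _ _ => mem_univ _)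
          (fun k _ => mem_filter.mpr ⟨mem_univ _, isPerfectMatching_cycleRange_inv k⟩)
          (fun σ hσ => by
            have hpm : IsPerfectMatching ChainEdge σ := (mem_filter.mp hσ).2
            exact (isPerfectMatching_chainEdge_iff.mp hpm).symm)
          (fun k _ => cycleRange_inv_apply_zero k)
    _ = N := by simp

theorem bijOn_outcome_chain {C : Fin N → Fin N → Bool} (hC : ∀ a j, C a j = false ↔ a = 0) :
    Set.BijOn (outcome C) {σ | IsPerfectMatching ChainEdge σ}
      {s | (univ.filter (fun j => s j = false)).card = 1} := by
  refine ⟨fun σ _ => ?_, fun σ hσ τ hτ hστ => ?_, fun s hs => ?_⟩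
  · simp [filter_outcome_eq_false hC]
  · have h0 : σ 0 = τ 0 := by
      simpa [filter_outcome_eq_false hC] using
        congrArg (fun s => univ.filter (fun j => s j = false)) hστ
    rw [isPerfectMatching_chainEdge_iff.mp hσ, isPerfectMatching_chainEdge_iff.mp hτ, h0]
  · obtain ⟨k, hk⟩ := card_eq_one.mp hs
    refine ⟨_, isPerfectMatching_cycleRange_inv k, outcome_eq_of_eq_false_iff hC fun j => ?_⟩
    rw [cycleRange_inv_apply_zero]
    simpa using Finset.ext_iff.mp hk j

end Chain

end LinearQuantumNetwork

open LinearQuantumNetwork in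
theorem w_chain_construction_general (N : ℕ) [NeZero N]
    (E : Fin N → Fin N → Prop)
    (hE : ∀ a j, E a j ↔ (a = j ∨ a = 0 ∨ (a ≠ 0 ∧ (j : ℕ) + 1 = (a : ℕ))))
    (C : Fin N → Fin N → Bool)
    (hC : ∀ a j, C a j = if a = 0 then false else true) :
    (∀ σ : Equiv.Perm (Fin N), (∀ a, E a (σ a)) ↔
      (σ = Equiv.refl (Fin N) ∨ ∃ k : Fin N, k ≠ 0 ∧ σ 0 = k ∧
        (∀ a : Fin N, a ≠ 0 → (a : ℕ) ≤ (k : ℕ) → (σ a : ℕ) + 1 = (a : ℕ)) ∧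
        (∀ a : Fin N, (k : ℕ) < (a : ℕ) → σ a = a))) ∧
    ((Finset.univ.filter
      (fun σ : Equiv.Perm (Fin N) => ∀ a, E a (σ a))).card = N) ∧
    (∀ j : Fin N, C ((Equiv.refl (Fin N))⁻¹ j) j = false ↔ j = 0) ∧
    (∀ σ : Equiv.Perm (Fin N), ∀ k : Fin N, k ≠ 0 → σ 0 = k →
      (∀ a : Fin N, a ≠ 0 → (a : ℕ) ≤ (k : ℕ) → (σ a : ℕ) + 1 = (a : ℕ)) →
      (∀ a : Fin N, (k : ℕ) < (a : ℕ) → σ a = a) →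
      ∀ j : Fin N, C (σ⁻¹ j) j = false ↔ j = k) ∧
    Set.BijOn (fun σ : Equiv.Perm (Fin N) => fun j => C (σ⁻¹ j) j)
      {σ : Equiv.Perm (Fin N) | ∀ a, E a (σ a)}
      {s : Fin N → Bool | (Finset.univ.filter (fun j => s j = false)).card = 1} := by
  obtain rfl : E = ChainEdge := funext₂ fun a j => propext (hE a j)
  have hred : ∀ a j, C a j = false ↔ a = 0 := fun a j => by simp [hC]
  refine ⟨fun σ => isPerfectMatching_chainEdge_iff_eq_one_or, ?_,
    outcome_eq_false_iff hred 1, fun σ k _ h0 _ _ => h0 ▸ outcome_eq_false_iff hred σ,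
    bijOn_outcome_chain hred⟩
  convert card_isPerfectMatching_chainEdge (N := N) using 3
  exact Iff.rfl

/-- W construction, chain form: On `Fin N` (`N ≥ 2`) with edge relation
`E a j ↔ (a = j ∨ a = 0 ∨ (a ≠ 0 ∧ j + 1 = a))` and colors `C a j = false` iff `a = 0`:
(1) the perfect matchings of `E` are exactly the identity together with, for each
`k ≠ 0`, the permutation `σ_k` with `σ_k 0 = k`, `σ_k a = a - 1` for `1 ≤ a ≤ k`, and
`σ_k a = a` for `a > k`; so there are exactly `N` of them;
(2) the outcome string of the identity is `false` exactly at coordinate `0` and that of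
`σ_k` is `false` exactly at coordinate `k`; hence the outcome-string map is a bijection
from the perfect matchings onto the `N` strings with a single `false` coordinate
(the `N`-partite W state). -/
theorem w_chain_construction (N : ℕ) [NeZero N] (hN : 2 ≤ N)
    (E : Fin N → Fin N → Prop)
    (hE : ∀ a j, E a j ↔ (a = j ∨ a = 0 ∨ (a ≠ 0 ∧ (j : ℕ) + 1 = (a : ℕ))))
    (C : Fin N → Fin N → Bool)
    (hC : ∀ a j, C a j = if a = 0 then false else true) :
    (∀ σ : Equiv.Perm (Fin N), (∀ a, E a (σ a)) ↔
      (σ = Equiv.refl (Fin N) ∨ ∃ k : Fin N, k ≠ 0 ∧ σ 0 = k ∧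
        (∀ a : Fin N, a ≠ 0 → (a : ℕ) ≤ (k : ℕ) → (σ a : ℕ) + 1 = (a : ℕ)) ∧
        (∀ a : Fin N, (k : ℕ) < (a : ℕ) → σ a = a))) ∧
    ((Finset.univ.filter
      (fun σ : Equiv.Perm (Fin N) => ∀ a, E a (σ a))).card = N) ∧
    (∀ j : Fin N, C ((Equiv.refl (Fin N))⁻¹ j) j = false ↔ j = 0) ∧
    (∀ σ : Equiv.Perm (Fin N), ∀ k : Fin N, k ≠ 0 → σ 0 = k →
      (∀ a : Fin N, a ≠ 0 → (a : ℕ) ≤ (k : ℕ) → (σ a : ℕ) + 1 = (a : ℕ)) →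
      (∀ a : Fin N, (k : ℕ) < (a : ℕ) → σ a = a) →
      ∀ j : Fin N, C (σ⁻¹ j) j = false ↔ j = k) ∧
    Set.BijOn (fun σ : Equiv.Perm (Fin N) => fun j => C (σ⁻¹ j) j)
      {σ : Equiv.Perm (Fin N) | ∀ a, E a (σ a)}
      {s : Fin N → Bool | (Finset.univ.filter (fun j => s j = false)).card = 1} :=
  w_chain_construction_general N E hE C hC
end

section
/- (N = 5 worked example: 3-separability) Let E be the edge relation on Fin 5 given (0-indexed) by: E 0 j ↔ j ∈ {0, 3}; E 1 j ↔ True; E 2 j ↔ j ∈ {0, 2}; E 3 j ↔ j ∈ {0, 2, 3}; E 4 j ↔ j ∈ {1, 4}; with colors C a j = false for a ∈ {0, 1} and C a j = true for a ∈ {2, 3, 4}. Then for every amplitude map T : Fin 5 → Fin 5 → ℂ with T a j ≠ 0 ↔ E a j, the postselected coefficient function Ψ factorizes as a product of three functions: there exist f, g, h : (Fin 5 → Bool) → ℂ with f s depending only on s 0 and s 3, g s depending only on s 2, and h s depending only on s 1 and s 4, such that Ψ s = f s * g s * h s for all s; i.e., the postselected state is 3-separable under the partition (X₁, X₄) | (X₃)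 | (X₂, X₅). -/
open scoped Classical

set_option maxRecDepth 100000 in
private def pA : Equiv.Perm (Fin 5) := ⟨![0,1,2,3,4], ![0,1,2,3,4], by decide, by decide⟩
set_option maxRecDepth 100000 in
private def pB : Equiv.Perm (Fin 5) := ⟨![3,1,0,2,4], ![2,1,3,0,4], by decide, by decide⟩
set_option maxRecDepth 100000 in
private def pC : Equiv.Perm (Fin 5) := ⟨![3,1,2,0,4], ![3,1,2,0,4], by decide, by decide⟩
set_option maxRecDepth 100000 in
private def pD : Equiv.Perm (Fin 5) := ⟨![0,4,2,3,1], ![0,4,2,3,1], by decide, by decide⟩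
set_option maxRecDepth 100000 in
private def pE : Equiv.Perm (Fin 5) := ⟨![3,4,0,2,1], ![2,4,3,0,1], by decide, by decide⟩
set_option maxRecDepth 100000 in
private def pF : Equiv.Perm (Fin 5) := ⟨![3,4,2,0,1], ![3,4,2,0,1], by decide, by decide⟩

set_option maxRecDepth 100000 in
private lemma key_perms : ∀ σ : Equiv.Perm (Fin 5),
    ((σ 0 = 0 ∨ σ 0 = 3) ∧ (σ 2 = 0 ∨ σ 2 = 2) ∧ (σ 3 = 0 ∨ σ 3 = 2 ∨ σ 3 = 3)
      ∧ (σ 4 = 1 ∨ σ 4 = 4)) ↔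
    (σ = pA ∨ σ = pB ∨ σ = pC ∨ σ = pD ∨ σ = pE ∨ σ = pF) := by decide

private lemma forall_fin5 (p : Fin 5 → Prop) :
    (∀ j : Fin 5, p j) ↔ (p 0 ∧ p 1 ∧ p 2 ∧ p 3 ∧ p 4) := by
  constructor
  · intro h; exact ⟨h 0, h 1, h 2, h 3, h 4⟩
  · rintro ⟨h0, h1, h2, h3, h4⟩ j; fin_cases j <;> assumption


/-- N = 5 worked example: 3-separability: For the edge relation on
`Fin 5` with `E 0 j ↔ j ∈ {0,3}`, `E 1 j ↔ True`, `E 2 j ↔ j ∈ {0,2}`,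
`E 3 j ↔ j ∈ {0,2,3}`, `E 4 j ↔ j ∈ {1,4}`, colors red (`false`) for particles `0, 1`
and blue (`true`) for `2, 3, 4`, and any amplitudes supported exactly on the edges, the
postselected coefficient function factorizes as `Ψ s = f s * g s * h s`, where `f`
depends only on `s 0, s 3`, `g` only on `s 2`, and `h` only on `s 1, s 4`: the state is
3-separable under `(X₁, X₄) | (X₃) | (X₂, X₅)`. -/
theorem n5_three_separable (E : Fin 5 → Fin 5 → Prop)
    (hE0 : ∀ j, E 0 j ↔ (j = 0 ∨ j = 3))
    (hE1 : ∀ j, E 1 j ↔ True)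
    (hE2 : ∀ j, E 2 j ↔ (j = 0 ∨ j = 2))
    (hE3 : ∀ j, E 3 j ↔ (j = 0 ∨ j = 2 ∨ j = 3))
    (hE4 : ∀ j, E 4 j ↔ (j = 1 ∨ j = 4))
    (C : Fin 5 → Fin 5 → Bool)
    (hC : ∀ a j, C a j = if a = 0 ∨ a = 1 then false else true)
    (T : Fin 5 → Fin 5 → ℂ)
    (hT : ∀ a j, T a j ≠ 0 ↔ E a j) :
    ∃ f g h : (Fin 5 → Bool) → ℂ,
      (∀ s t : Fin 5 → Bool, s 0 = t 0 → s 3 = t 3 → f s = f t) ∧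
      (∀ s t : Fin 5 → Bool, s 2 = t 2 → g s = g t) ∧
      (∀ s t : Fin 5 → Bool, s 1 = t 1 → s 4 = t 4 → h s = h t) ∧
      ∀ s : Fin 5 → Bool, lqnPsi E C T s = f s * g s * h s := by

  refine ⟨fun s => if s 0 = false ∧ s 3 = true then T 0 0 * T 2 2 * T 3 3
      else if s 0 = true ∧ s 3 = false then
        T 0 3 * (T 2 0 * T 3 2 + T 2 2 * T 3 0) else 0,
    fun s => if s 2 = true then 1 else 0,
    fun s => if s 1 = false ∧ s 4 = true then T 1 1 * T 4 4
      else if s 1 = true ∧ s 4 = false then T 1 4 * T 4 1 else 0,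
    ?_, ?_, ?_, ?_⟩
  · intro s t h1 h2; simp only [h1, h2]
  · intro s t h1; simp only [h1]
  · intro s t h1 h2; simp only [h1, h2]
  intro s
  unfold lqnPsi
  refine Eq.trans (Finset.sum_congr (?_ : _ =
      (({pA, pB, pC, pD, pE, pF} : Finset (Equiv.Perm (Fin 5))).filter
        (fun σ => ∀ j, C (σ⁻¹ j) j = s j))) fun _ _ => rfl) ?_
  · ext σ
    simp only [Finset.mem_filter, Finset.mem_univ, true_and, Finset.mem_insert,
      Finset.mem_singleton]
    constructor
    · rintro ⟨hPM, hout⟩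
      refine ⟨(key_perms σ).1 ⟨(hE0 _).1 (hPM 0), (hE2 _).1 (hPM 2),
        (hE3 _).1 (hPM 3), (hE4 _).1 (hPM 4)⟩, hout⟩
    · rintro ⟨hmem, hout⟩
      refine ⟨fun a => ?_, hout⟩
      have hQ := (key_perms σ).2 hmem
      fin_cases a
      · exact (hE0 _).2 hQ.1
      · exact (hE1 _).2 trivial
      · exact (hE2 _).2 hQ.2.1
      · exact (hE3 _).2 hQ.2.2.1
      · exact (hE4 _).2 hQ.2.2.2
  rw [Finset.sum_filter]
  rw [Finset.sum_insert (by decide), Finset.sum_insert (by decide),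
    Finset.sum_insert (by decide), Finset.sum_insert (by decide),
    Finset.sum_insert (by decide), Finset.sum_singleton]
  have oA : ∀ j, C (pA⁻¹ j) j = ![false, false, true, true, true] j := by
    intro j; rw [hC]; fin_cases j <;> decide
  have oB : ∀ j, C (pB⁻¹ j) j = ![true, false, true, false, true] j := by
    intro j; rw [hC]; fin_cases j <;> decide
  have oC : ∀ j, C (pC⁻¹ j) j = ![true, false, true, false, true] j := by
    intro j; rw [hC]; fin_cases j <;> decide
  have oD : ∀ j, C (pD⁻¹ j) j = ![false, true, true, true, false] j := by
    intro j; rw [hC]; fin_cases j <;> decide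
  have oE : ∀ j, C (pE⁻¹ j) j = ![true, true, true, false, false] j := by
    intro j; rw [hC]; fin_cases j <;> decide
  have oF : ∀ j, C (pF⁻¹ j) j = ![true, true, true, false, false] j := by
    intro j; rw [hC]; fin_cases j <;> decide
  have prodA : (∏ a, T a (pA a)) = T 0 0 * T 1 1 * T 2 2 * T 3 3 * T 4 4 := by
    rw [Fin.prod_univ_five]; rfl
  have prodB : (∏ a, T a (pB a)) = T 0 3 * T 1 1 * T 2 0 * T 3 2 * T 4 4 := by
    rw [Fin.prod_univ_five]; rfl
  have prodC : (∏ a, T a (pC a)) = T 0 3 * T 1 1 * T 2 2 * T 3 0 * T 4 4 := by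
    rw [Fin.prod_univ_five]; rfl
  have prodD : (∏ a, T a (pD a)) = T 0 0 * T 1 4 * T 2 2 * T 3 3 * T 4 1 := by
    rw [Fin.prod_univ_five]; rfl
  have prodE : (∏ a, T a (pE a)) = T 0 3 * T 1 4 * T 2 0 * T 3 2 * T 4 1 := by
    rw [Fin.prod_univ_five]; rfl
  have prodF : (∏ a, T a (pF a)) = T 0 3 * T 1 4 * T 2 2 * T 3 0 * T 4 1 := by
    rw [Fin.prod_univ_five]; rfl
  simp only [oA, oB, oC, oD, oE, oF, prodA, prodB, prodC, prodD, prodE, prodF,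
    forall_fin5]
  cases hs0 : s 0 <;> cases hs1 : s 1 <;> cases hs2 : s 2 <;> cases hs3 : s 3 <;>
    cases hs4 : s 4 <;>
    simp only [hs0, hs1, hs2, hs3, hs4, Matrix.cons_val_zero, Matrix.cons_val_one,
      Matrix.head_cons, Matrix.cons_val_two, Matrix.tail_cons, Matrix.cons_val_three,
      Matrix.cons_val_four, if_true, if_false, and_true, and_false, true_and, false_and,
      and_self, Bool.true_eq_false, Bool.false_eq_true, not_true, not_false_iff] <;>
    norm_num <;> ring
end
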